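/- arXiv:1408.3249 — 2 statements merged into one kernel-verified Lean document; each statement's English description precedes it below -/
import Mathlib

section
/- Let O be an integral domain, p^m a power of a prime with p^(m+1) ≠ 0 in O, and let f, g, h_{a,b} ∈ O[[q]] with f = φ + p·f₁, g = φ + p·g₁. Suppose T is an O-linear operator on O[[q]] with T f = (α + p·λ₁)·f and T g = (α + p·μ₁)·g. Then for any a, b ∈ O with a + b invertible, setting h = (a·f + b·g)/(a+b), one has T h ≡ (α + p·(a·λ₁ + b·μ₁)/(a+b))·h modulo p² (i.e., the difference lies in p²·O[[q]]). -/
open PowerSeries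

/-- With `ν = c (a λ + b μ)` one has `a (λ - ν) + b (μ - ν) = 0`, so the error term
`p c (a (λ - ν) f + b (μ - ν) g)` equals `p c a (λ - ν) (f - g)`, and `f - g` is divisible by `p`. -/
theorem LinearMap.apply_smul_add_smul_sub_smul_eq_sq_smul
    {R M : Type*} [CommRing R] [AddCommGroup M] [Module R M] (T : M →ₗ[R] M)
    {p α lam mu a b c : R} {f g d : M}
    (hTf : T f = (α + p * lam) • f) (hTg : T g = (α + p * mu) • g)
    (hfg : f - g = p • d) (hc : c * (a + b) = 1) :
    T (c • (a • f + b • g)) - (α + p * (c * (a * lam + b * mu))) • c • (a • f + b • g) =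
      p ^ 2 • (c * a * (lam - c * (a * lam + b * mu))) • d := by
  rw [map_smul, map_add, map_smul, map_smul, hTf, hTg]
  linear_combination (norm := module) (p * c * a * (lam - c * (a * lam + b * mu))) • hfg
    - hc • ((p * c * (a * lam + b * mu)) • g)

theorem calegari_emerton_weak_eigenform_general
    (O : Type*) [CommRing O]
    (p : O)
    (φ f₁ g₁ : PowerSeries O)
    (f g : PowerSeries O)
    (hf : f = φ + PowerSeries.C p * f₁)
    (hg : g = φ + PowerSeries.C p * g₁)
    (T : PowerSeries O →ₗ[O] PowerSeries O)
    (α lam₁ mu₁ : O)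
    (hTf : T f = (α + p * lam₁) • f)
    (hTg : T g = (α + p * mu₁) • g)
    (a b : O) (hab : IsUnit (a + b))
    (h : PowerSeries O)
    (hh : h = (((hab.unit⁻¹ : Oˣ) : O)) • (a • f + b • g)) :
    ∃ s : PowerSeries O,
      T h - (α + p * (((hab.unit⁻¹ : Oˣ) : O) * (a * lam₁ + b * mu₁))) • h =
        PowerSeries.C (p ^ 2) * s := by
  set c : O := ((hab.unit⁻¹ : Oˣ) : O)
  have hc : c * (a + b) = 1 := hab.val_inv_mul
  have hfg : f - g = p • (f₁ - g₁) := by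
    rw [hf, hg, smul_eq_C_mul]
    ring
  refine ⟨C (c * a * (lam₁ - c * (a * lam₁ + b * mu₁))) * (f₁ - g₁), ?_⟩
  rw [hh, T.apply_smul_add_smul_sub_smul_eq_sq_smul hTf hTg hfg hc, smul_eq_C_mul,
    smul_eq_C_mul, mul_assoc]

/-- The Calegari–Emerton construction.  Let `O` be an integral domain, `p ∈ O` with
`p^(m+1) ≠ 0`, and `f = φ + p·f₁`, `g = φ + p·g₁` formal power series over `O`.  Suppose
`T` is an `O`-linear operator on `O[[q]]` with `T f = (α + p·λ₁)·f` and
`T g = (α + p·μ₁)·g`.  Then for any `a, b ∈ O` with `a + b` invertible, setting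
`h = (a·f + b·g)/(a+b)`, one has `T h ≡ (α + p·(a·λ₁ + b·μ₁)/(a+b))·h` modulo `p²`,
i.e. the difference lies in `p²·O[[q]]`. -/
theorem calegari_emerton_weak_eigenform
    (O : Type*) [CommRing O] [IsDomain O]
    (p : O) (m : ℕ) (hp : p ^ (m + 1) ≠ 0)
    (φ f₁ g₁ : PowerSeries O)
    (f g : PowerSeries O)
    (hf : f = φ + PowerSeries.C p * f₁)
    (hg : g = φ + PowerSeries.C p * g₁)
    (T : PowerSeries O →ₗ[O] PowerSeries O)
    (α lam₁ mu₁ : O)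
    (hTf : T f = (α + p * lam₁) • f)
    (hTg : T g = (α + p * mu₁) • g)
    (a b : O) (hab : IsUnit (a + b))
    (h : PowerSeries O)
    (hh : h = (((hab.unit⁻¹ : Oˣ) : O)) • (a • f + b • g)) :
    ∃ s : PowerSeries O,
      T h - (α + p * (((hab.unit⁻¹ : Oˣ) : O) * (a * lam₁ + b * mu₁))) • h =
        PowerSeries.C (p ^ 2) * s :=
  calegari_emerton_weak_eigenform_general O p φ f₁ g₁ f g hf hg T α lam₁ mu₁ hTf hTg a b hab h hh
end

section
/- Let R be a compact topological ring which is the projective limit of an inverse system of compact rings R_r with surjective transition maps, and let I ⊆ R be a closed ideal such that the quotient R/I is finite. Then there exists an index r such that the natural map R/I → R_r/π_r(I) is an isomorphism, where π_r: R → R_r is the projection. -/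
/-!
A closed ideal of finite index in a topological ring is open, so its complement is compact.
The kernels of the projections form a directed family of closed sets with trivial
intersection, hence by compactness one of them misses the complement of `I`, i.e. lies in
`I`. At that level `π_r(I)` pulls back to `I` itself, which is the claimed bijectivity.
-/

theorem Ideal.isOpen_of_isClosed_of_finite_quotient {R : Type*} [Ring R]
    [TopologicalSpace R] [IsTopologicalAddGroup R] {I : Ideal R}
    (hclosed : IsClosed (I : Set R)) [hfin : Finite (R ⧸ I)] : IsOpen (I : Set R) :=
  have : I.toAddSubgroup.FiniteIndex := @AddSubgroup.finiteIndex_of_finite_quotient _ _ _ hfin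
  I.toAddSubgroup.isOpen_of_isClosed_of_finiteIndex hclosed

theorem Ideal.quotientMap_map_bijective_of_ker_le {R S : Type*} [CommRing R] [CommRing S]
    {f : R →+* S} (hf : Function.Surjective f) {I : Ideal R} (hker : RingHom.ker f ≤ I) :
    Function.Bijective (Ideal.quotientMap (I.map f) f Ideal.le_comap_map) := by
  refine ⟨Ideal.quotientMap_injective' ?_, Ideal.quotientMap_surjective hf⟩
  rw [Ideal.comap_map_of_surjective f hf]
  exact sup_le le_rfl hker

theorem RingHom.exists_ker_le_of_isOpen {ι R : Type*} [Nonempty ι] [Ring R]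
    [TopologicalSpace R] [CompactSpace R] {S : ι → Type*} [∀ r, Semiring (S r)]
    [∀ r, TopologicalSpace (S r)] [∀ r, T1Space (S r)] (π : ∀ r, R →+* S r)
    (hcont : ∀ r, Continuous (π r))
    (hdir : Directed (· ≥ ·) fun r => RingHom.ker (π r))
    (hsep : ∀ x : R, x ≠ 0 → ∃ r, π r x ≠ 0) {I : Ideal R} (hI : IsOpen (I : Set R)) :
    ∃ r, RingHom.ker (π r) ≤ I := by
  have hker_closed (r : ι) : IsClosed (RingHom.ker (π r) : Set R) :=
    isClosed_singleton.preimage (hcont r)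
  have hker_iInter : (I : Set R)ᶜ ∩ ⋂ r, (RingHom.ker (π r) : Set R) = ∅ := by
    refine Set.eq_empty_of_forall_notMem fun x ⟨hxI, hx⟩ => hxI ?_
    by_contra hx0
    obtain ⟨r, hr⟩ := hsep x (ne_of_mem_of_not_mem I.zero_mem hx0).symm
    exact hr (Set.mem_iInter.mp hx r)
  obtain ⟨r, hr⟩ := hI.isClosed_compl.isCompact.elim_directed_family_closed _ hker_closed
    hker_iInter (hdir.mono_comp _ fun _ _ h => h)
  exact ⟨r, fun x hx => by_contra fun hxI => hr.subset ⟨hxI, hx⟩⟩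

theorem exists_level_realizing_finite_quotient_general
    (ι : Type*) [Preorder ι] [Nonempty ι]
    (hdir : ∀ r s : ι, ∃ t : ι, r ≤ t ∧ s ≤ t)
    (R : Type*) [CommRing R] [TopologicalSpace R] [IsTopologicalRing R]
    [CompactSpace R]
    (S : ι → Type*) [∀ r, CommRing (S r)] [∀ r, TopologicalSpace (S r)]
    [∀ r, T2Space (S r)]
    (π : ∀ r : ι, R →+* S r)
    (hcont : ∀ r, Continuous (π r))
    (hsurj : ∀ r, Function.Surjective (π r))
    (t : ∀ {r s : ι}, r ≤ s → S s →+* S r)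
    (hcompat : ∀ {r s : ι} (h : r ≤ s), (t h).comp (π s) = π r)
    (hsep : ∀ x : R, x ≠ 0 → ∃ r, π r x ≠ 0)
    (I : Ideal R) (hclosed : IsClosed (I : Set R)) (hfin : Finite (R ⧸ I)) :
    ∃ r : ι, Function.Bijective
      (Ideal.quotientMap (I.map (π r)) (π r) Ideal.le_comap_map) := by
  have : IsDirectedOrder ι := ⟨hdir⟩
  have hker_anti : Antitone fun r => RingHom.ker (π r) := fun r s h x hx => by
    rw [RingHom.mem_ker, ← hcompat h, RingHom.comp_apply, hx, map_zero]
  obtain ⟨r, hr⟩ := RingHom.exists_ker_le_of_isOpen π hcont hker_anti.directed_ge hsep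
    (Ideal.isOpen_of_isClosed_of_finite_quotient hclosed)
  exact ⟨r, Ideal.quotientMap_map_bijective_of_ker_le (hsurj r) hr⟩

/-- Let `R` be a compact (Hausdorff) topological ring which is the projective limit of an
inverse system of compact Hausdorff rings `S r` (over a directed index set) with surjective
continuous transition maps; being the projective limit is expressed by the compatible
surjective continuous projections `π r : R →+* S r` separating the points of `R`.  Let
`I ⊆ R` be a closed ideal such that `R ⧸ I` is finite.  Then there is an index `r` such
that the natural map `R ⧸ I → S r ⧸ π_r(I)` is an isomorphism (a bijection). -/
theorem exists_level_realizing_finite_quotient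
    (ι : Type*) [Preorder ι] [Nonempty ι]
    (hdir : ∀ r s : ι, ∃ t : ι, r ≤ t ∧ s ≤ t)
    (R : Type*) [CommRing R] [TopologicalSpace R] [IsTopologicalRing R]
    [CompactSpace R] [T2Space R]
    (S : ι → Type*) [∀ r, CommRing (S r)] [∀ r, TopologicalSpace (S r)]
    [∀ r, IsTopologicalRing (S r)] [∀ r, CompactSpace (S r)] [∀ r, T2Space (S r)]
    (π : ∀ r : ι, R →+* S r)
    (hcont : ∀ r, Continuous (π r))
    (hsurj : ∀ r, Function.Surjective (π r))
    (t : ∀ {r s : ι}, r ≤ s → S s →+* S r)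
    (htcont : ∀ {r s : ι} (h : r ≤ s), Continuous (t h))
    (htsurj : ∀ {r s : ι} (h : r ≤ s), Function.Surjective (t h))
    (hcompat : ∀ {r s : ι} (h : r ≤ s), (t h).comp (π s) = π r)
    (hsep : ∀ x : R, x ≠ 0 → ∃ r, π r x ≠ 0)
    (I : Ideal R) (hclosed : IsClosed (I : Set R)) (hfin : Finite (R ⧸ I)) :
    ∃ r : ι, Function.Bijective
      (Ideal.quotientMap (I.map (π r)) (π r) Ideal.le_comap_map) :=
  exists_level_realizing_finite_quotient_general ι hdir R S π hcont hsurj t hcompat hsep I hclosed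
    hfin
end
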